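/- Suppose n ≥ 5, the (n-1)-tuple (a_0,...,a_{n-2}) over Z_k is left-semi-symmetric, and the (n-1)-tuple (a_1,...,a_{n-1}) is right-semi-symmetric. Then a_i = a_{i+4} for all 0 ≤ i ≤ n-5, and writing c_j = a_j for j = 0,1,2,3: if n ≡ 0 (mod 4) then c_0 = c_1 and c_2 = c_3; if n ≡ 1 (mod 4) then c_0 = c_2; if n ≡ 2 (mod 4) then c_0 = c_3 and c_1 = c_2; if n ≡ 3 (mod 4) then c_1 = c_3. -/

import Mathlib

/-!
Both semi-symmetries are reflections of the index line: `i ↦ n - 3 - i` and `i ↦ n + 1 - i`.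
Their composite is the translation `i ↦ i + 4`, so `a` is `4`-periodic on `0, …, n - 1`.
The relations between `a 0, …, a 3` then come from the left reflection applied to
`a 0 = a (n - 3)`, `a 1 = a (n - 4)` and `a 2 = a (n - 5)`, reduced modulo `4`.
-/

variable {α : Type*} {a : ℕ → α}

theorem apply_add_two_mul_of_reflect_of_reflect {m s : ℕ}
    (hleft : ∀ i ≤ m, a (m - i) = a i)
    (hright : ∀ j, s ≤ j → j ≤ m + s → a (m + 2 * s - j) = a j)
    (i : ℕ) (hi : i + s ≤ m) : a (i + 2 * s) = a i := by
  calc a (i + 2 * s) = a (m + 2 * s - (m - i)) := by congr 1; omega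
    _ = a (m - i) := hright (m - i) (by omega) (by omega)
    _ = a i := hleft i (by omega)

theorem apply_add_mul_eq_of_periodic_le {p N : ℕ}
    (hper : ∀ i, i + p ≤ N → a (i + p) = a i) (r q : ℕ) (hrq : r + p * q ≤ N) :
    a (r + p * q) = a r := by
  induction q with
  | zero => simp
  | succ q ih =>
    rw [mul_add_one, ← add_assoc] at hrq ⊢
    rw [hper _ hrq, ih (by omega)]

theorem apply_mod_eq_of_periodic_le {p N : ℕ}
    (hper : ∀ i, i + p ≤ N → a (i + p) = a i) (j : ℕ) (hj : j ≤ N) :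
    a (j % p) = a j := by
  conv_rhs => rw [← Nat.mod_add_div j p]
  exact (apply_add_mul_eq_of_periodic_le hper _ _ (by rwa [Nat.mod_add_div])).symm

theorem left_semi_and_right_semi_symmetric_period_four_general
    (n k : ℕ) (hn : 5 ≤ n) (a : ℕ → ZMod k)
    (hleftA : ∀ i, i ≤ n - 3 → a i = a (n - 3 - i))
    (hrightB : ∀ i, 1 ≤ i → i ≤ n - 2 → a (1 + i) = a (1 + (n - 1 - i))) :
    (∀ i, i ≤ n - 5 → a i = a (i + 4)) ∧
    (n % 4 = 0 → a 0 = a 1 ∧ a 2 = a 3) ∧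
    (n % 4 = 1 → a 0 = a 2) ∧
    (n % 4 = 2 → a 0 = a 3 ∧ a 1 = a 2) ∧
    (n % 4 = 3 → a 1 = a 3) := by
  have hleft : ∀ i ≤ n - 3, a (n - 3 - i) = a i := fun i hi => (hleftA i hi).symm
  have hright : ∀ j, 2 ≤ j → j ≤ n - 3 + 2 → a (n - 3 + 2 * 2 - j) = a j := by
    intro j hj₂ hjn
    have h := hrightB (j - 1) (by omega) (by omega)
    rw [show 1 + (j - 1) = j by omega, show 1 + (n - 1 - (j - 1)) = n - 3 + 2 * 2 - j by omega]
      at h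
    exact h.symm
  have hper : ∀ i, i + 4 ≤ n - 1 → a (i + 4) = a i := fun i hi =>
    apply_add_two_mul_of_reflect_of_reflect hleft hright i (by omega)
  have hmod (i : ℕ) (hi : i ≤ n - 3) : a i = a ((n - 3 - i) % 4) := by
    rw [hleftA i hi, apply_mod_eq_of_periodic_le hper _ (by omega)]
  have h0 := hmod 0 (by omega)
  have h1 := hmod 1 (by omega)
  have h2 := hmod 2 (by omega)
  refine ⟨fun i hi => (hper i (by omega)).symm, fun h => ?_, fun h => ?_, fun h => ?_, fun h => ?_⟩
  · rw [show (n - 3 - 0) % 4 = 1 by omega] at h0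
    rw [show (n - 3 - 2) % 4 = 3 by omega] at h2
    exact ⟨h0, h2⟩
  · rwa [show (n - 3 - 0) % 4 = 2 by omega] at h0
  · rw [show (n - 3 - 0) % 4 = 3 by omega] at h0
    rw [show (n - 3 - 1) % 4 = 2 by omega] at h1
    exact ⟨h0, h1⟩
  · rwa [show (n - 3 - 1) % 4 = 3 by omega] at h1

/-- If `n ≥ 5`, the `(n-1)`-tuple `(a 0, ..., a (n-2))` over `ZMod k` is
left-semi-symmetric and the `(n-1)`-tuple `(a 1, ..., a (n-1))` is
right-semi-symmetric, then `a i = a (i+4)` for `i ≤ n-5`, and: if `n ≡ 0 (mod 4)`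
then `a 0 = a 1` and `a 2 = a 3`; if `n ≡ 1 (mod 4)` then `a 0 = a 2`; if
`n ≡ 2 (mod 4)` then `a 0 = a 3` and `a 1 = a 2`; if `n ≡ 3 (mod 4)` then
`a 1 = a 3`. -/
theorem left_semi_and_right_semi_symmetric_period_four
    (n k : ℕ) (hn : 5 ≤ n) (hk : 2 ≤ k) (a : ℕ → ZMod k)
    (hleftA : ∀ i, i ≤ n - 3 → a i = a (n - 3 - i))
    (hrightB : ∀ i, 1 ≤ i → i ≤ n - 2 → a (1 + i) = a (1 + (n - 1 - i))) :
    (∀ i, i ≤ n - 5 → a i = a (i + 4)) ∧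
    (n % 4 = 0 → a 0 = a 1 ∧ a 2 = a 3) ∧
    (n % 4 = 1 → a 0 = a 2) ∧
    (n % 4 = 2 → a 0 = a 3 ∧ a 1 = a 2) ∧
    (n % 4 = 3 → a 1 = a 3) :=
  left_semi_and_right_semi_symmetric_period_four_general n k hn a hleftA hrightB
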